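/- Let A ∈ ℝ^(m×n) with pseudo-inverse G = A⁺ and a ∈ ℝ^m with a − A G a = 0 (i.e., a lies in the column space of A). Then with d = G a and bᵀ = (1 + dᵀd)⁻¹ dᵀ G, the matrix G' = [G − d bᵀ ; bᵀ] is the Moore–Penrose pseudo-inverse of A' = [A a]. -/

import Mathlib

/-!
Write `A' = [A a]`, `G' = [G - d bᵀ ; bᵀ]` and `β = (1 + dᵀd)⁻¹`. Since `a = A d` lies in the
column space of `A`, the rank-one corrections cancel: `A' G' = A (G - d bᵀ) + a bᵀ = A G`, so the
first three Penrose conditions for `A', G'` reduce to those for `A, G`. For the fourth, `G' A'` is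
the bordered matrix `[G A - β d dᵀ, β d ; β dᵀ, 1 - β]`, symmetric because `G A` is.
-/

open Matrix
/-- `G` is the Moore–Penrose pseudo-inverse of `A` (the four Penrose conditions). -/
def IsMoorePenrose {m n : ℕ} (A : Matrix (Fin m) (Fin n) ℝ)
    (G : Matrix (Fin n) (Fin m) ℝ) : Prop :=
  A * G * A = A ∧ G * A * G = G ∧ (A * G)ᵀ = A * G ∧ (G * A)ᵀ = G * A

section AppendColumnRow

variable {R ι κ : Type*} {n : ℕ}

def snocCol (A : Matrix ι (Fin n) R) (a : ι → R) : Matrix ι (Fin (n + 1)) R :=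
  of fun i j => (Fin.snoc (A i) (a i) : Fin (n + 1) → R) j

def snocRow (H : Matrix (Fin n) κ R) (b : κ → R) : Matrix (Fin (n + 1)) κ R :=
  of (Fin.snoc H b : Fin (n + 1) → κ → R)

@[simp]
theorem snocCol_apply_castSucc (A : Matrix ι (Fin n) R) (a : ι → R) (i : ι) (j : Fin n) :
    snocCol A a i j.castSucc = A i j := by
  simp [snocCol]

@[simp]
theorem snocCol_apply_last (A : Matrix ι (Fin n) R) (a : ι → R) (i : ι) :
    snocCol A a i (Fin.last n) = a i := by
  simp [snocCol]

@[simp]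
theorem snocRow_apply_castSucc (H : Matrix (Fin n) κ R) (b : κ → R) (j : Fin n) :
    snocRow H b j.castSucc = H j :=
  Fin.snoc_castSucc (α := fun _ => κ → R) ..

@[simp]
theorem snocRow_apply_last (H : Matrix (Fin n) κ R) (b : κ → R) :
    snocRow H b (Fin.last n) = b :=
  Fin.snoc_last (α := fun _ => κ → R) ..

theorem snocCol_mul_snocRow [NonUnitalNonAssocSemiring R] (A : Matrix ι (Fin n) R) (a : ι → R)
    (H : Matrix (Fin n) κ R) (b : κ → R) :
    snocCol A a * snocRow H b = A * H + vecMulVec a b := by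
  ext i k
  simp [mul_apply, Fin.sum_univ_castSucc, vecMulVec_apply]

theorem mul_snocCol [NonUnitalNonAssocSemiring R] [Fintype ι] (M : Matrix κ ι R)
    (A : Matrix ι (Fin n) R) (a : ι → R) :
    M * snocCol A a = snocCol (M * A) (M *ᵥ a) := by
  ext i j
  induction j using Fin.lastCases <;> simp [mul_apply, mulVec, dotProduct]

theorem snocRow_mul [NonUnitalNonAssocSemiring R] [Fintype κ] (H : Matrix (Fin n) κ R)
    (b : κ → R) (M : Matrix κ ι R) :
    snocRow H b * M = snocRow (H * M) (b ᵥ* M) := by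
  ext i j
  induction i using Fin.lastCases <;> simp [mul_apply, vecMul, dotProduct]

theorem vecMul_snocCol [NonUnitalNonAssocSemiring R] [Fintype ι] (v : ι → R)
    (A : Matrix ι (Fin n) R) (a : ι → R) :
    v ᵥ* snocCol A a = Fin.snoc (v ᵥ* A) (v ⬝ᵥ a) := by
  ext j
  induction j using Fin.lastCases <;> simp [vecMul, dotProduct]

theorem isSymm_snocRow_snocCol {S : Matrix (Fin n) (Fin n) R} (hS : S.IsSymm)
    (v : Fin n → R) (c : R) : (snocRow (snocCol S v) (Fin.snoc v c)).IsSymm := by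
  ext i j
  induction i using Fin.lastCases <;> induction j using Fin.lastCases <;>
    simp [hS.apply]

end AppendColumnRow

theorem inv_one_add_dotProduct_self_mul {K ι : Type*} [Field K] [LinearOrder K]
    [IsStrictOrderedRing K] [Fintype ι] (d : ι → K) :
    (1 + d ⬝ᵥ d)⁻¹ * (d ⬝ᵥ d) = 1 - (1 + d ⬝ᵥ d)⁻¹ := by
  have hdd : 0 ≤ d ⬝ᵥ d := Finset.sum_nonneg fun i _ => mul_self_nonneg (d i)
  have : 1 + d ⬝ᵥ d ≠ 0 := by linarith
  field_simp
  ring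

/-- Greville's column-update formula, case `a - A G a = 0` (the new column lies in the
column space of `A`): with `d = G a` and `bᵀ = (1 + dᵀ d)⁻¹ dᵀ G`, the stacked matrix
`[G - d bᵀ ; bᵀ]` is the pseudo-inverse of `A' = [A a]`. -/
theorem stmt11 {m n : ℕ} (A : Matrix (Fin m) (Fin n) ℝ) (G : Matrix (Fin n) (Fin m) ℝ)
    (hG : IsMoorePenrose A G)
    (a : Fin m → ℝ) (ha2 : a - A.mulVec (G.mulVec a) = 0)
    (d : Fin n → ℝ) (hd : d = G.mulVec a)
    (b : Fin m → ℝ) (hb : b = (1 + d ⬝ᵥ d)⁻¹ • Matrix.vecMul d G) :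
    IsMoorePenrose (Matrix.of fun i j => (Fin.snoc (A i) (a i) : Fin (n + 1) → ℝ) j)
      (Matrix.of (Fin.snoc (fun j : Fin n => (G - Matrix.vecMulVec d b) j) b : Fin (n + 1) → Fin m → ℝ)) := by
  obtain ⟨hAGA, hGAG, hAG, hGA⟩ := hG
  have hAd : A *ᵥ d = a := by rw [hd]; exact (sub_eq_zero.mp ha2).symm
  have hAGa : (A * G) *ᵥ a = a := by rw [← mulVec_mulVec, ← hd, hAd]
  set β := (1 + d ⬝ᵥ d)⁻¹ with hβ
  have hbA : b ᵥ* A = β • d := by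
    rw [hb, smul_vecMul, vecMul_vecMul, ← hGA, vecMul_transpose, ← mulVec_mulVec, hAd, ← hd]
  have hbAG : b ᵥ* (A * G) = b := by
    rw [hb, smul_vecMul, vecMul_vecMul, ← Matrix.mul_assoc, hGAG]
  have hba : b ⬝ᵥ a = 1 - β := by
    rw [hb, smul_dotProduct, ← dotProduct_mulVec, ← hd, smul_eq_mul, hβ,
      inv_one_add_dotProduct_self_mul]
  have hHa : (G - vecMulVec d b) *ᵥ a = β • d := by
    rw [sub_mulVec, vecMulVec_mulVec, op_smul_eq_smul, ← hd, hba, sub_smul, one_smul,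
      sub_sub_cancel]
  have hA'G' : snocCol A a * snocRow (G - vecMulVec d b) b = A * G := by
    rw [snocCol_mul_snocRow, Matrix.mul_sub, mul_vecMulVec, hAd, sub_add_cancel]
  change IsMoorePenrose (snocCol A a) (snocRow (G - vecMulVec d b) b)
  refine ⟨?_, ?_, ?_, ?_⟩
  · rw [hA'G', mul_snocCol, hAGA, hAGa]
  · rw [Matrix.mul_assoc, hA'G', snocRow_mul, Matrix.sub_mul, vecMulVec_mul, hbAG,
      ← Matrix.mul_assoc, hGAG]
  · rw [hA'G']; exact hAG
  · rw [snocRow_mul, mul_snocCol, vecMul_snocCol, hHa, hbA, Matrix.sub_mul, vecMulVec_mul, hbA]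
    refine isSymm_snocRow_snocCol (IsSymm.sub hGA ?_) _ _
    simp [IsSymm]
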